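/- arXiv:1308.6136 — 7 statements merged into one kernel-verified Lean document; each statement's English description precedes it below -/
import Mathlib

section
/- Let C be a symmetric 2×2 real matrix and D := (1/2)(CΩ − ΩC), where Ω is the 90-degree rotation matrix. Then a nonzero vector v ∈ ℝ² satisfies ⟨v, D v⟩ = 0 if and only if v is an eigenvector of C. (Consequently, perfect shearless barriers — curves with pointwise zero Lagrangian shear, i.e. null-geodesics of the metric g(u,v)=⟨u,Dv⟩ — are everywhere tangent to the eigenvector fields of the Cauchy–Green strain tensor.) -/
open Matrix

noncomputable def Omega : Matrix (Fin 2) (Fin 2) ℝ := !![0, -1; 1, 0]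

noncomputable def shearD (C : Matrix (Fin 2) (Fin 2) ℝ) : Matrix (Fin 2) (Fin 2) ℝ :=
  (1 / 2 : ℝ) • (C * Omega - Omega * C)

/-- For a symmetric 2×2 real matrix `C` and `D := (1/2)(CΩ − ΩC)`,
a nonzero vector `v` satisfies `⟨v, D v⟩ = 0` iff `v` is an eigenvector of `C`. -/
theorem shearless_iff_eigenvector (C : Matrix (Fin 2) (Fin 2) ℝ) (hC : C.IsSymm)
    (v : Fin 2 → ℝ) (hv : v ≠ 0) :
    v ⬝ᵥ ((shearD C) *ᵥ v) = 0 ↔ ∃ μ : ℝ, C *ᵥ v = μ • v := by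
  have hb : C 1 0 = C 0 1 := by
    have := congrFun (congrFun hC 0) 1
    simpa [Matrix.IsSymm, Matrix.transpose_apply] using this
  set a := C 0 0 with ha
  set b := C 0 1 with hbb
  set c := C 1 1 with hc
  set x := v 0 with hx
  set y := v 1 with hy
  have hq : v ⬝ᵥ ((shearD C) *ᵥ v)
      = b * x ^ 2 + (c - a) * x * y - b * y ^ 2 := by
    simp [shearD, Omega, mulVec, vecMul, dotProduct, Fin.sum_univ_two, Matrix.mul_apply,
      Matrix.sub_apply, hb, ← ha, ← hbb, ← hc, ← hx, ← hy]
    ring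
  rw [hq]
  constructor
  · intro h
    have hxy : x ≠ 0 ∨ y ≠ 0 := by
      by_contra hcon
      push_neg at hcon
      apply hv
      funext i
      fin_cases i <;> simp [hcon.1, hcon.2, ← hx, ← hy]
    rcases hxy with hx0 | hy0
    · refine ⟨(a * x + b * y) / x, ?_⟩
      funext i
      fin_cases i
      · simp [mulVec, dotProduct, Fin.sum_univ_two, ← ha, ← hbb, ← hx, ← hy]
        field_simp
      · simp [mulVec, dotProduct, Fin.sum_univ_two, hb, ← hbb, ← hc, ← hx, ← hy]
        field_simp
        linear_combination h
    · refine ⟨(b * x + c * y) / y, ?_⟩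
      funext i
      fin_cases i
      · simp [mulVec, dotProduct, Fin.sum_univ_two, ← ha, ← hbb, ← hx, ← hy]
        field_simp
        linear_combination -h
      · simp [mulVec, dotProduct, Fin.sum_univ_two, hb, ← hbb, ← hc, ← hx, ← hy]
        field_simp
  · rintro ⟨μ, hμ⟩
    have h0 := congrFun hμ 0
    have h1 := congrFun hμ 1
    simp [mulVec, dotProduct, Fin.sum_univ_two, hb, ← ha, ← hbb, ← hc, ← hx, ← hy] at h0 h1
    linear_combination x * h1 - y * h0
end

section
/- Let F be an invertible 2×2 real matrix, C := FᵀF, and D := (1/2)(CΩ − ΩC). Then for every nonzero v ∈ ℝ², the Lagrangian shear identity holds: ⟨ F v / |F v| , F(Ωv) / |Ωv| ⟩ = ⟨v, D v⟩ / √( ⟨v, C v⟩ · ⟨v, v⟩ ). (This expresses the tangential projection of an advected normal vector purely in terms of the Cauchy–Green tensor C and the tensor D.) -/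
open Matrix

/-- Lagrangian shear identity.  For an invertible `F`, `C := FᵀF`,
`D := (1/2)(CΩ − ΩC)`, and every nonzero `v`,
`⟨Fv/|Fv|, F(Ωv)/|Ωv|⟩ = ⟨v, Dv⟩ / √(⟨v,Cv⟩⟨v,v⟩)`. -/
theorem lagrangian_shear_identity (F : Matrix (Fin 2) (Fin 2) ℝ) (hF : IsUnit F.det)
    (v : Fin 2 → ℝ) (hv : v ≠ 0) :
    ((F *ᵥ v) ⬝ᵥ (F *ᵥ (Omega *ᵥ v)))
        / (Real.sqrt ((F *ᵥ v) ⬝ᵥ (F *ᵥ v)) * Real.sqrt ((Omega *ᵥ v) ⬝ᵥ (Omega *ᵥ v)))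
      = (v ⬝ᵥ ((shearD (Fᵀ * F)) *ᵥ v))
        / Real.sqrt ((v ⬝ᵥ ((Fᵀ * F) *ᵥ v)) * (v ⬝ᵥ v)) := by
  have hnum : ((F *ᵥ v) ⬝ᵥ (F *ᵥ (Omega *ᵥ v))) = (v ⬝ᵥ ((shearD (Fᵀ * F)) *ᵥ v)) := by
    simp [shearD, Omega, Matrix.mulVec, Matrix.vecMul, Matrix.mul_apply, dotProduct,
      Fin.sum_univ_two, Matrix.transpose_apply]
    ring
  have h1 : ((F *ᵥ v) ⬝ᵥ (F *ᵥ v)) = (v ⬝ᵥ ((Fᵀ * F) *ᵥ v)) := by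
    simp [Matrix.mulVec, Matrix.mul_apply, dotProduct, Fin.sum_univ_two,
      Matrix.transpose_apply]
    ring
  have h2 : ((Omega *ᵥ v) ⬝ᵥ (Omega *ᵥ v)) = (v ⬝ᵥ v) := by
    simp [Omega, Matrix.mulVec, dotProduct, Fin.sum_univ_two]
    ring
  have hnn : 0 ≤ (v ⬝ᵥ ((Fᵀ * F) *ᵥ v)) := by
    rw [← h1]
    have : ((F *ᵥ v) ⬝ᵥ (F *ᵥ v)) = ((F *ᵥ v) 0) ^ 2 + ((F *ᵥ v) 1) ^ 2 := by
      simp [dotProduct, Fin.sum_univ_two]; ring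
    rw [this]; positivity
  rw [hnum, h1, h2, ← Real.sqrt_mul hnn]
end

section
/- Let C be a symmetric 2×2 real matrix with eigenvalues λ₁ ≤ λ₂, and let D := (1/2)(CΩ − ΩC). Then D is symmetric, has trace zero, and det D = −(λ₂ − λ₁)²/4. In particular det D < 0 (so that the bilinear form g(u,v) = ⟨u, D v⟩ is an indefinite, Lorentzian-type metric of signature (−,+)) if and only if C is not a scalar multiple of the identity, and D = 0 if and only if λ₁ = λ₂. -/
open Matrix

/-- For a symmetric 2×2 real matrix `C` with eigenvalues `λ₁ ≤ λ₂`
(encoded via an orthonormal eigenbasis `ξ₁, Ωξ₁`), the matrix `D := (1/2)(CΩ − ΩC)`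
is symmetric and trace-free, with `det D = −(λ₂ − λ₁)²/4`.  Moreover `det D < 0`
iff `C` is not a scalar multiple of the identity, and `D = 0` iff `λ₁ = λ₂`. -/
theorem shearD_lorentzian (C : Matrix (Fin 2) (Fin 2) ℝ) (hC : C.IsSymm)
    (lam₁ lam₂ : ℝ) (hle : lam₁ ≤ lam₂)
    (ξ₁ : Fin 2 → ℝ) (hξ₁unit : ξ₁ ⬝ᵥ ξ₁ = 1)
    (hξ₁ : C *ᵥ ξ₁ = lam₁ • ξ₁)
    (hξ₂ : C *ᵥ (Omega *ᵥ ξ₁) = lam₂ • (Omega *ᵥ ξ₁)) :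
    (shearD C).IsSymm ∧
    (shearD C).trace = 0 ∧
    (shearD C).det = -((lam₂ - lam₁) ^ 2) / 4 ∧
    ((shearD C).det < 0 ↔ ¬∃ c : ℝ, C = c • (1 : Matrix (Fin 2) (Fin 2) ℝ)) ∧
    (shearD C = 0 ↔ lam₁ = lam₂) := by
  have hba : C 1 0 = C 0 1 := hC.apply 0 1
  obtain ⟨a, b, d, x, y, ha, hb, hd, hx, hy⟩ :
      ∃ a b d x y : ℝ, C 0 0 = a ∧ C 0 1 = b ∧ C 1 1 = d ∧ ξ₁ 0 = x ∧ ξ₁ 1 = y :=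
    ⟨_, _, _, _, _, rfl, rfl, rfl, rfl, rfl⟩
  have hunit : x ^ 2 + y ^ 2 = 1 := by
    have h := hξ₁unit
    simp [dotProduct, Fin.sum_univ_two, hx, hy] at h
    nlinarith [h]
  have e1 := congrFun hξ₁ 0
  have e2 := congrFun hξ₁ 1
  have e3 := congrFun hξ₂ 0
  have e4 := congrFun hξ₂ 1
  simp [Matrix.mulVec, dotProduct, Fin.sum_univ_two, Omega, hba, ha, hb, hd, hx, hy]
    at e1 e2 e3 e4
  have h5 : (a - d) * x + 2 * b * y = (lam₁ - lam₂) * x := by linear_combination e1 - e4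
  have h6 : 2 * b * x - (a - d) * y = (lam₁ - lam₂) * y := by linear_combination e2 + e3
  have key : (a - d) ^ 2 + 4 * b ^ 2 = (lam₂ - lam₁) ^ 2 := by
    linear_combination ((a - d) * x + 2 * b * y + (lam₁ - lam₂) * x) * h5 +
      (2 * b * x - (a - d) * y + (lam₁ - lam₂) * y) * h6 -
      ((a - d) ^ 2 + 4 * b ^ 2 - (lam₁ - lam₂) ^ 2) * hunit
  have hD : shearD C = !![b, (d - a) / 2; (d - a) / 2, -b] := by
    ext i j
    fin_cases i <;> fin_cases j <;>
      simp [shearD, Omega, Matrix.mul_apply, Matrix.vecMul, dotProduct,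
        Fin.sum_univ_two, hba, ha, hb, hd] <;> ring
  have hdet : (shearD C).det = -((lam₂ - lam₁) ^ 2) / 4 := by
    rw [hD, Matrix.det_fin_two_of]
    linear_combination (-(1:ℝ)/4) * key
  refine ⟨?_, ?_, hdet, ?_, ?_⟩
  · rw [hD]
    ext i j
    fin_cases i <;> fin_cases j <;> simp [Matrix.transpose_apply]
  · rw [hD, Matrix.trace_fin_two]
    simp
  · constructor
    · rintro hlt ⟨c, hCc⟩
      have hb0 : b = 0 := by
        have h := congrFun (congrFun hCc 0) 1
        simpa [Matrix.one_apply, hb] using h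
      have had : a = d := by
        have h1 := congrFun (congrFun hCc 0) 0
        have h2 := congrFun (congrFun hCc 1) 1
        simp [Matrix.one_apply, ha, hd] at h1 h2
        rw [h1, h2]
      have hs : (lam₂ - lam₁) ^ 2 = 0 := by
        rw [hb0, had] at key
        linarith [key]
      rw [hdet, hs] at hlt
      linarith
    · intro hns
      by_contra hge
      push_neg at hge
      rw [hdet] at hge
      have hs : (lam₂ - lam₁) ^ 2 = 0 := by
        have := sq_nonneg (lam₂ - lam₁)
        linarith
      have hb2 : b ^ 2 = 0 := by
        have := sq_nonneg (a - d)
        have := sq_nonneg b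
        linarith [key]
      have had2 : (a - d) ^ 2 = 0 := by
        have := sq_nonneg b
        linarith [key]
      have hb0 : b = 0 := sq_eq_zero_iff.mp hb2
      have had : a = d := by
        have := sq_eq_zero_iff.mp had2
        linarith
      refine hns ⟨a, ?_⟩
      ext i j
      fin_cases i <;> fin_cases j <;>
        simp [Matrix.one_apply, ha, hb, hd, hba, hb0, had]
  · constructor
    · intro h0
      rw [hD] at h0
      have hb0 : b = 0 := by
        have h := congrFun (congrFun h0 0) 0
        simpa using h
      have had : a - d = 0 := by
        have h := congrFun (congrFun h0 0) 1
        have : (d - a) / 2 = 0 := by simpa using h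
        linarith
      have hs : (lam₂ - lam₁) ^ 2 = 0 := by
        rw [had, hb0] at key
        linarith [key]
      have := sq_eq_zero_iff.mp hs
      linarith
    · intro heq
      have key2 : (a - d) ^ 2 + 4 * b ^ 2 = 0 := by
        rw [heq] at key
        simpa using key
      have hb2 : b ^ 2 = 0 := by
        have := sq_nonneg (a - d)
        have := sq_nonneg b
        linarith
      have had2 : (a - d) ^ 2 = 0 := by
        have := sq_nonneg b
        linarith
      have hb0 : b = 0 := sq_eq_zero_iff.mp hb2
      have had : d - a = 0 := by
        have := sq_eq_zero_iff.mp had2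
        linarith
      rw [hD, hb0, had]
      ext i j
      fin_cases i <;> fin_cases j <;> simp
end

section
/- Let F be a 2×2 real matrix with det F > 0, let e ∈ ℝ² be a unit vector and n := Ωe its unit normal, and let C := FᵀF. Then the component of the advected normal F n along the unit normal Ω(Fe)/|Fe| of the advected tangent Fe satisfies ⟨ Ω(Fe)/|Fe| , F n ⟩ = det F / |F e| = 1 / √( ⟨n, C⁻¹ n⟩ ). (This identifies the normal repulsion ρ(r,n) = 1/√(⟨n, C⁻¹ n⟩) of a material line with the normal component of the linearly advected unit normal.) -/
open Matrix

/-- Normal repulsion identity.  For `F` with `det F > 0`, a unit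
tangent `e` with unit normal `n := Ωe`, and `C := FᵀF`, the normal component of
the advected normal satisfies
`⟨Ω(Fe)/|Fe|, Fn⟩ = det F / |Fe| = 1/√(⟨n, C⁻¹ n⟩)`. -/
theorem normal_repulsion_identity (F : Matrix (Fin 2) (Fin 2) ℝ) (hF : 0 < F.det)
    (e : Fin 2 → ℝ) (he : e ⬝ᵥ e = 1) :
    ((Omega *ᵥ (F *ᵥ e)) ⬝ᵥ (F *ᵥ (Omega *ᵥ e))) / Real.sqrt ((F *ᵥ e) ⬝ᵥ (F *ᵥ e))
        = F.det / Real.sqrt ((F *ᵥ e) ⬝ᵥ (F *ᵥ e)) ∧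
    F.det / Real.sqrt ((F *ᵥ e) ⬝ᵥ (F *ᵥ e))
        = 1 / Real.sqrt ((Omega *ᵥ e) ⬝ᵥ ((Fᵀ * F)⁻¹ *ᵥ (Omega *ᵥ e))) := by
  set a := F 0 0 with ha
  set b := F 0 1 with hb
  set c := F 1 0 with hc
  set d := F 1 1 with hd
  set x := e 0 with hx
  set y := e 1 with hy
  have hdet : F.det = a * d - b * c := by
    rw [Matrix.det_fin_two]
  have hxy : x * x + y * y = 1 := by
    simpa [dotProduct, Fin.sum_univ_two] using he
  have hdet2 : (Fᵀ * F).det = F.det * F.det := by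
    rw [Matrix.det_mul, Matrix.det_transpose]
  have hinv : (Fᵀ * F)⁻¹ = (F.det * F.det)⁻¹ • (Fᵀ * F).adjugate := by
    rw [Matrix.inv_def, hdet2, Ring.inverse_eq_inv]
  have hnum : ((Omega *ᵥ (F *ᵥ e)) ⬝ᵥ (F *ᵥ (Omega *ᵥ e))) = F.det := by
    simp [Omega, Matrix.mulVec, dotProduct, Fin.sum_univ_two, hdet,
      Matrix.vecHead, Matrix.vecTail]
    nlinarith [hxy]
  refine ⟨by rw [hnum], ?_⟩
  have hFe : (F *ᵥ e) ⬝ᵥ (F *ᵥ e) = (a*x+b*y)^2 + (c*x+d*y)^2 := by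
    simp [Matrix.mulVec, dotProduct, Fin.sum_univ_two]; ring
  have hFepos : 0 < (F *ᵥ e) ⬝ᵥ (F *ᵥ e) := by
    rcases lt_or_ge 0 ((F *ᵥ e) ⬝ᵥ (F *ᵥ e)) with h | h
    · exact h
    · exfalso
      have h1 : (a*x+b*y)^2 + (c*x+d*y)^2 ≤ 0 := hFe ▸ h
      have h2 : a*x+b*y = 0 := by nlinarith [sq_nonneg (a*x+b*y), sq_nonneg (c*x+d*y)]
      have h3 : c*x+d*y = 0 := by nlinarith [sq_nonneg (a*x+b*y), sq_nonneg (c*x+d*y)]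
      have hdetpos : 0 < a*d - b*c := hdet ▸ hF
      have hx0 : (a*d - b*c) * x = 0 := by linear_combination d*h2 - b*h3
      have hy0 : (a*d - b*c) * y = 0 := by linear_combination a*h3 - c*h2
      have hx0' : x = 0 := by
        rcases mul_eq_zero.1 hx0 with h | h
        · exact absurd h (ne_of_gt hdetpos)
        · exact h
      have hy0' : y = 0 := by
        rcases mul_eq_zero.1 hy0 with h | h
        · exact absurd h (ne_of_gt hdetpos)
        · exact h
      rw [hx0', hy0'] at hxy; norm_num at hxy
  have hQ : (Omega *ᵥ e) ⬝ᵥ ((Fᵀ * F)⁻¹ *ᵥ (Omega *ᵥ e))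
      = ((F *ᵥ e) ⬝ᵥ (F *ᵥ e)) / (F.det * F.det) := by
    rw [hinv, Matrix.adjugate_fin_two]
    simp [Omega, Matrix.mulVec, dotProduct, Fin.sum_univ_two, Matrix.mul_apply,
      Matrix.transpose_apply, hFe, hdet, Matrix.vecHead, Matrix.vecTail, div_eq_mul_inv]
    ring
  rw [hQ, Real.sqrt_div hFepos.le, Real.sqrt_mul_self hF.le, one_div_div]
end

section
/- Let C be a symmetric positive-definite 2×2 real matrix with eigenvalues λ₁, λ₂ and unit eigenvector ξ₁ for λ₁ such that ξ₂ := Ωξ₁ is the eigenvector for λ₂. Let D := (1/2)(CΩ − ΩC) and, for v ≠ 0, let M(v) := [ 2⟨v,Cv⟩⟨v,v⟩ D − ⟨v,Dv⟩⟨v,v⟩ C − ⟨v,Dv⟩⟨v,Cv⟩ I ] / (⟨v,Cv⟩⟨v,v⟩)^{3/2}. Then for v = αξ₁ + βξ₂ with (α, β) ≠ (0,0): ⟨M(v) v, Ω v⟩ = [ (α²λ₁ + β²λ₂)(α² − β²)(λ₂ − λ₁) − α²β²(λ₂ − λ₁)² ] / [ (α² + β²)^{1/2} (α²λ₁ + β²λ₂)^{3/2}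 ]. -/
/-! In the frame `ξ₁, ξ₂ = Ωξ₁`, `C` acts diagonally and `Ω` by a quarter turn, so every
inner product entering `⟨M(v)v, Ωv⟩` is a quadratic form in `(α, β)`; the `I`-term drops out
because `Ωv ⊥ v`. The common factor `⟨v,v⟩` of the numerator cancels against the denominator
`√(⟨v,Cv⟩⟨v,v⟩)³ = √⟨v,Cv⟩³ · ⟨v,v⟩ · √⟨v,v⟩`, and when either square root vanishes (junk value
included) both sides are `0`. -/

open Matrix

/-- The matrix `M(v) = [2⟨v,Cv⟩⟨v,v⟩ D − ⟨v,Dv⟩⟨v,v⟩ C − ⟨v,Dv⟩⟨v,Cv⟩ I] / √(⟨v,Cv⟩⟨v,v⟩)³`. -/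
noncomputable def Mmat (C : Matrix (Fin 2) (Fin 2) ℝ) (v : Fin 2 → ℝ) :
    Matrix (Fin 2) (Fin 2) ℝ :=
  (Real.sqrt ((v ⬝ᵥ (C *ᵥ v)) * (v ⬝ᵥ v)) ^ 3)⁻¹ •
    ((2 * (v ⬝ᵥ (C *ᵥ v)) * (v ⬝ᵥ v)) • shearD C
      - ((v ⬝ᵥ ((shearD C) *ᵥ v)) * (v ⬝ᵥ v)) • C
      - ((v ⬝ᵥ ((shearD C) *ᵥ v)) * (v ⬝ᵥ (C *ᵥ v))) • (1 : Matrix (Fin 2) (Fin 2) ℝ))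

section QuarterTurn

variable (x y : Fin 2 → ℝ)

theorem Omega_mulVec : Omega *ᵥ x = ![-x 1, x 0] := by
  ext i
  fin_cases i <;> simp [Omega, mulVec, dotProduct, Fin.sum_univ_two]

theorem Omega_mulVec_Omega_mulVec : Omega *ᵥ (Omega *ᵥ x) = -x := by
  rw [Omega_mulVec, Omega_mulVec]
  ext i
  fin_cases i <;> simp

theorem dotProduct_Omega_mulVec_self : x ⬝ᵥ (Omega *ᵥ x) = 0 := by
  simp only [Omega_mulVec, dotProduct, Fin.sum_univ_two, cons_val_zero, cons_val_one]
  ring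

theorem Omega_mulVec_dotProduct_Omega_mulVec : (Omega *ᵥ x) ⬝ᵥ (Omega *ᵥ y) = x ⬝ᵥ y := by
  simp only [Omega_mulVec, dotProduct, Fin.sum_univ_two, cons_val_zero, cons_val_one]
  ring

end QuarterTurn

section Frame

variable {ξ : Fin 2 → ℝ}

theorem dotProduct_frame (hξ : ξ ⬝ᵥ ξ = 1) (p q r s : ℝ) :
    (p • ξ + q • (Omega *ᵥ ξ)) ⬝ᵥ (r • ξ + s • (Omega *ᵥ ξ)) = p * r + q * s := by
  have hξΩ : ξ ⬝ᵥ (Omega *ᵥ ξ) = 0 := dotProduct_Omega_mulVec_self ξ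
  have hΩξ : (Omega *ᵥ ξ) ⬝ᵥ ξ = 0 := by rw [dotProduct_comm, hξΩ]
  simp only [dotProduct_add, add_dotProduct, smul_dotProduct, dotProduct_smul, smul_eq_mul, hξ,
    hξΩ, hΩξ, Omega_mulVec_dotProduct_Omega_mulVec]
  ring

theorem Omega_mulVec_frame (p q : ℝ) :
    Omega *ᵥ (p • ξ + q • (Omega *ᵥ ξ)) = (-q) • ξ + p • (Omega *ᵥ ξ) := by
  rw [mulVec_add, mulVec_smul, mulVec_smul, Omega_mulVec_Omega_mulVec]
  module

variable {C : Matrix (Fin 2) (Fin 2) ℝ} {lam₁ lam₂ : ℝ}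

theorem mulVec_frame (hξ₁ : C *ᵥ ξ = lam₁ • ξ)
    (hξ₂ : C *ᵥ (Omega *ᵥ ξ) = lam₂ • (Omega *ᵥ ξ)) (p q : ℝ) :
    C *ᵥ (p • ξ + q • (Omega *ᵥ ξ)) = (p * lam₁) • ξ + (q * lam₂) • (Omega *ᵥ ξ) := by
  rw [mulVec_add, mulVec_smul, mulVec_smul, hξ₁, hξ₂, smul_smul, smul_smul]

theorem shearD_mulVec_frame (hξ₁ : C *ᵥ ξ = lam₁ • ξ)
    (hξ₂ : C *ᵥ (Omega *ᵥ ξ) = lam₂ • (Omega *ᵥ ξ)) (p q : ℝ) :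
    shearD C *ᵥ (p • ξ + q • (Omega *ᵥ ξ))
      = (q * (lam₂ - lam₁) / 2) • ξ + (p * (lam₂ - lam₁) / 2) • (Omega *ᵥ ξ) := by
  rw [shearD, smul_mulVec, sub_mulVec, ← mulVec_mulVec, ← mulVec_mulVec, Omega_mulVec_frame,
    mulVec_frame hξ₁ hξ₂, mulVec_frame hξ₁ hξ₂, Omega_mulVec_frame]
  module

end Frame

theorem Mmat_mulVec_dotProduct_Omega_mulVec (C : Matrix (Fin 2) (Fin 2) ℝ) (v : Fin 2 → ℝ) :
    (Mmat C v *ᵥ v) ⬝ᵥ (Omega *ᵥ v)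
      = (v ⬝ᵥ v) * (2 * (v ⬝ᵥ (C *ᵥ v)) * ((shearD C *ᵥ v) ⬝ᵥ (Omega *ᵥ v))
          - (v ⬝ᵥ (shearD C *ᵥ v)) * ((C *ᵥ v) ⬝ᵥ (Omega *ᵥ v)))
        / Real.sqrt ((v ⬝ᵥ (C *ᵥ v)) * (v ⬝ᵥ v)) ^ 3 := by
  simp only [Mmat, smul_mulVec, sub_mulVec, one_mulVec, smul_dotProduct, sub_dotProduct,
    dotProduct_Omega_mulVec_self, smul_eq_mul]
  ring

theorem mul_div_sqrt_mul_pow_three {N : ℝ} (hN : 0 ≤ N) (A X : ℝ) :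
    N * X / Real.sqrt (A * N) ^ 3 = X / (Real.sqrt N * Real.sqrt A ^ 3) := by
  obtain ⟨s, hs, rfl⟩ : ∃ s, 0 ≤ s ∧ N = s ^ 2 := ⟨_, Real.sqrt_nonneg N, (Real.sq_sqrt hN).symm⟩
  rw [Real.sqrt_mul' A (sq_nonneg s), Real.sqrt_sq hs]
  rcases eq_or_ne s 0 with rfl | hs₀
  · simp
  · field_simp

theorem boundary_term_eigenbasis_general (C : Matrix (Fin 2) (Fin 2) ℝ)
    (lam₁ lam₂ : ℝ)
    (ξ₁ : Fin 2 → ℝ) (hξ₁unit : ξ₁ ⬝ᵥ ξ₁ = 1)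
    (hξ₁ : C *ᵥ ξ₁ = lam₁ • ξ₁)
    (hξ₂ : C *ᵥ (Omega *ᵥ ξ₁) = lam₂ • (Omega *ᵥ ξ₁))
    (α β : ℝ) :
    ((Mmat C (α • ξ₁ + β • (Omega *ᵥ ξ₁))) *ᵥ (α • ξ₁ + β • (Omega *ᵥ ξ₁)))
        ⬝ᵥ (Omega *ᵥ (α • ξ₁ + β • (Omega *ᵥ ξ₁)))
      = ((α ^ 2 * lam₁ + β ^ 2 * lam₂) * (α ^ 2 - β ^ 2) * (lam₂ - lam₁)
            - α ^ 2 * β ^ 2 * (lam₂ - lam₁) ^ 2)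
        / (Real.sqrt (α ^ 2 + β ^ 2) * Real.sqrt (α ^ 2 * lam₁ + β ^ 2 * lam₂) ^ 3) := by
  rw [Mmat_mulVec_dotProduct_Omega_mulVec, shearD_mulVec_frame hξ₁ hξ₂, mulVec_frame hξ₁ hξ₂,
    Omega_mulVec_frame]
  simp only [dotProduct_frame hξ₁unit]
  rw [show α * α + β * β = α ^ 2 + β ^ 2 by ring,
    show α * (α * lam₁) + β * (β * lam₂) = α ^ 2 * lam₁ + β ^ 2 * lam₂ by ring,
    mul_div_sqrt_mul_pow_three (by positivity)]
  ring

/-- The boundary term `⟨M(v)v, Ωv⟩` of the first variation of the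
averaged Lagrangian shear, evaluated on `v = αξ₁ + βξ₂`, equals
`[(α²λ₁+β²λ₂)(α²−β²)(λ₂−λ₁) − α²β²(λ₂−λ₁)²] / [(α²+β²)^{1/2}(α²λ₁+β²λ₂)^{3/2}]`. -/
theorem boundary_term_eigenbasis (C : Matrix (Fin 2) (Fin 2) ℝ) (hC : C.PosDef)
    (lam₁ lam₂ : ℝ)
    (ξ₁ : Fin 2 → ℝ) (hξ₁unit : ξ₁ ⬝ᵥ ξ₁ = 1)
    (hξ₁ : C *ᵥ ξ₁ = lam₁ • ξ₁)
    (hξ₂ : C *ᵥ (Omega *ᵥ ξ₁) = lam₂ • (Omega *ᵥ ξ₁))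
    (α β : ℝ) (hαβ : (α, β) ≠ (0, 0)) :
    ((Mmat C (α • ξ₁ + β • (Omega *ᵥ ξ₁))) *ᵥ (α • ξ₁ + β • (Omega *ᵥ ξ₁)))
        ⬝ᵥ (Omega *ᵥ (α • ξ₁ + β • (Omega *ᵥ ξ₁)))
      = ((α ^ 2 * lam₁ + β ^ 2 * lam₂) * (α ^ 2 - β ^ 2) * (lam₂ - lam₁)
            - α ^ 2 * β ^ 2 * (lam₂ - lam₁) ^ 2)
        / (Real.sqrt (α ^ 2 + β ^ 2) * Real.sqrt (α ^ 2 * lam₁ + β ^ 2 * lam₂) ^ 3) :=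
  boundary_term_eigenbasis_general C lam₁ lam₂ ξ₁ hξ₁unit hξ₁ hξ₂ α β
end

section
/- Let 0 < λ₁ < λ₂ and let α, β ∈ ℝ with α² + β² = 1. Then (α²λ₁ + β²λ₂)(α² − β²)(λ₂ − λ₁) − α²β²(λ₂ − λ₁)² = 0 if and only if α² = √λ₂ / (√λ₁ + √λ₂) and β² = √λ₁ / (√λ₁ + √λ₂). (Hence, when the Cauchy–Green eigenvalues are distinct, the boundary term of the first variation of the averaged Lagrangian shear vanishes exactly when the endpoint tangent is a shear vector r′ = ±√(√λ₂/(√λ₁+√λ₂)) ξ₁ ± √(√λ₁/(√λ₁+√λ₂)) ξ₂.) -/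
/-!
On the unit circle put `t = α²`, so `β² = 1 - t`. The numerator then collapses to
`-(λ₂ - λ₁) · ((λ₂ - λ₁) t² - 2 λ₂ t + λ₂)`, and writing `λᵢ = sᵢ²` with `sᵢ = √λᵢ` the quadratic
factors as `((s₂ - s₁) t - s₂) ((s₂ + s₁) t - s₂)`. The first root `s₂ / (s₂ - s₁)` exceeds `1`,
so the only admissible root is `t = s₂ / (s₁ + s₂)`, and then `β² = 1 - t = s₁ / (s₁ + s₂)`.
-/

lemma boundary_numerator_eq_of_sq_add_sq_eq_one {lam₁ lam₂ α β : ℝ} (hunit : α ^ 2 + β ^ 2 = 1) :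
    (α ^ 2 * lam₁ + β ^ 2 * lam₂) * (α ^ 2 - β ^ 2) * (lam₂ - lam₁)
        - α ^ 2 * β ^ 2 * (lam₂ - lam₁) ^ 2
      = -(lam₂ - lam₁) * ((lam₂ - lam₁) * (α ^ 2) ^ 2 - 2 * lam₂ * α ^ 2 + lam₂) := by
  rw [show β ^ 2 = 1 - α ^ 2 by linarith]
  ring

lemma shear_quadratic_factor (s₁ s₂ t : ℝ) :
    (s₂ ^ 2 - s₁ ^ 2) * t ^ 2 - 2 * s₂ ^ 2 * t + s₂ ^ 2
      = ((s₂ - s₁) * t - s₂) * ((s₂ + s₁) * t - s₂) := by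
  ring

lemma shear_quadratic_eq_zero_iff {s₁ s₂ t : ℝ} (hs₁ : 0 < s₁) (hs₁₂ : s₁ < s₂) (ht : t ≤ 1) :
    (s₂ ^ 2 - s₁ ^ 2) * t ^ 2 - 2 * s₂ ^ 2 * t + s₂ ^ 2 = 0 ↔ t = s₂ / (s₁ + s₂) := by
  have hs₂ : 0 < s₂ := hs₁.trans hs₁₂
  have hfirst : (s₂ - s₁) * t - s₂ ≠ 0 := by nlinarith
  rw [shear_quadratic_factor, mul_eq_zero, or_iff_right hfirst, eq_div_iff (by positivity)]
  constructor <;> intro h <;> linarith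

lemma quadratic_eq_zero_iff_eq_sqrt_div {lam₁ lam₂ t : ℝ} (h₁ : 0 < lam₁) (h₁₂ : lam₁ < lam₂)
    (ht : t ≤ 1) :
    (lam₂ - lam₁) * t ^ 2 - 2 * lam₂ * t + lam₂ = 0
      ↔ t = Real.sqrt lam₂ / (Real.sqrt lam₁ + Real.sqrt lam₂) := by
  have h₂ : 0 < lam₂ := h₁.trans h₁₂
  have := shear_quadratic_eq_zero_iff (Real.sqrt_pos.mpr h₁) (Real.sqrt_lt_sqrt h₁.le h₁₂) ht
  rwa [Real.sq_sqrt h₁.le, Real.sq_sqrt h₂.le] at this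

/-- For `0 < λ₁ < λ₂` and a unit vector with coordinates `(α, β)`
in the Cauchy–Green eigenbasis, the boundary-term numerator
`(α²λ₁+β²λ₂)(α²−β²)(λ₂−λ₁) − α²β²(λ₂−λ₁)²` vanishes iff
`α² = √λ₂/(√λ₁+√λ₂)` and `β² = √λ₁/(√λ₁+√λ₂)` (the shear-vector directions). -/
theorem boundary_term_vanishes_iff_shear_vector (lam₁ lam₂ : ℝ)
    (h₁ : 0 < lam₁) (h₁₂ : lam₁ < lam₂) (α β : ℝ) (hunit : α ^ 2 + β ^ 2 = 1) :
    (α ^ 2 * lam₁ + β ^ 2 * lam₂) * (α ^ 2 - β ^ 2) * (lam₂ - lam₁)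
        - α ^ 2 * β ^ 2 * (lam₂ - lam₁) ^ 2 = 0
      ↔ α ^ 2 = Real.sqrt lam₂ / (Real.sqrt lam₁ + Real.sqrt lam₂)
        ∧ β ^ 2 = Real.sqrt lam₁ / (Real.sqrt lam₁ + Real.sqrt lam₂) := by
  have hα : α ^ 2 ≤ 1 := by nlinarith [sq_nonneg β]
  rw [boundary_numerator_eq_of_sq_add_sq_eq_one hunit, mul_eq_zero, neg_eq_zero,
    or_iff_right (sub_ne_zero.mpr h₁₂.ne'), quadratic_eq_zero_iff_eq_sqrt_div h₁ h₁₂ hα,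
    iff_self_and]
  intro hα_eq
  have hsum : Real.sqrt lam₁ + Real.sqrt lam₂ ≠ 0 := by positivity
  rw [show β ^ 2 = 1 - α ^ 2 by linarith, hα_eq, one_sub_div hsum, add_sub_cancel_right]
end

section
/- Every differentiable function y : ℝ → ℝ satisfying y′(t) = −y(t) − y(t)³ for all t converges to 0 as t → ∞; moreover y(t)² ≤ y(0)² e^{−2t} for all t ≥ 0. (Hence the line y = 0 of the flow ẋ = x(1 + 3y²), ẏ = −y − y³ is attracting: it is a hyperbolic attracting LCS even though it is a trench of the FTLE field, showing that an FTLE trench is not necessarily a parabolic barrier.) -/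
open Filter Real Topology

/-!
Along a solution, `t ↦ y(t)² e^{2t}` is nonincreasing: its derivative is
`2 e^{2t} (y y' + y²) = -2 e^{2t} y⁴ ≤ 0`. This gives the exponential bound on `y²`,
which forces `y → 0`.
-/

theorem antitone_sq_mul_exp_of_mul_deriv_le {y y' : ℝ → ℝ} {c : ℝ}
    (hy : ∀ t, HasDerivAt y (y' t) t) (hdiss : ∀ t, y t * y' t ≤ -c * y t ^ 2) :
    Antitone fun t => y t ^ 2 * exp (2 * c * t) := by
  have hderiv : ∀ t, HasDerivAt (fun t => y t ^ 2 * exp (2 * c * t))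
      (2 * exp (2 * c * t) * (y t * y' t + c * y t ^ 2)) t := by
    intro t
    have hexp : HasDerivAt (fun t => exp (2 * c * t)) (exp (2 * c * t) * (2 * c)) t :=
      ((hasDerivAt_id t).const_mul (2 * c)).exp.congr_deriv (by simp)
    exact (((hy t).fun_pow 2).fun_mul hexp).congr_deriv (by ring)
  refine antitone_of_deriv_nonpos (fun t => (hderiv t).differentiableAt) fun t => ?_
  rw [(hderiv t).deriv]
  exact mul_nonpos_of_nonneg_of_nonpos (by positivity) (by linarith [hdiss t])

theorem sq_le_sq_mul_exp_of_mul_deriv_le {y y' : ℝ → ℝ} {c : ℝ}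
    (hy : ∀ t, HasDerivAt y (y' t) t) (hdiss : ∀ t, y t * y' t ≤ -c * y t ^ 2)
    {t : ℝ} (ht : 0 ≤ t) :
    y t ^ 2 ≤ y 0 ^ 2 * exp (-2 * c * t) := by
  have h := antitone_sq_mul_exp_of_mul_deriv_le hy hdiss ht
  simp only [mul_zero, exp_zero, mul_one] at h
  calc y t ^ 2 = y t ^ 2 * exp (2 * c * t) * exp (-2 * c * t) := by
        rw [mul_assoc, ← exp_add, show 2 * c * t + -2 * c * t = 0 by ring, exp_zero, mul_one]
    _ ≤ y 0 ^ 2 * exp (-2 * c * t) := by gcongr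

theorem Filter.Tendsto.of_sq_tendsto_zero {α : Type*} {l : Filter α} {f : α → ℝ}
    (h : Tendsto (fun a => f a ^ 2) l (𝓝 0)) : Tendsto f l (𝓝 0) := by
  rw [tendsto_zero_iff_abs_tendsto_zero]
  simpa [Function.comp_def, sqrt_sq_eq_abs] using h.sqrt

theorem tendsto_mul_exp_neg_mul_atTop_nhds_zero (a : ℝ) {k : ℝ} (hk : 0 < k) :
    Tendsto (fun t => a * exp (-k * t)) atTop (𝓝 0) := by
  have h := tendsto_exp_neg_atTop_nhds_zero.comp (tendsto_id.const_mul_atTop hk)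
  simpa [Function.comp_def] using h.const_mul a

/-- Every differentiable solution of `y′ = −y − y³` tends to `0`
as `t → ∞`, and satisfies `y(t)² ≤ y(0)² e^{−2t}` for `t ≥ 0`. -/
theorem decoupled_y_equation_attracting (y : ℝ → ℝ)
    (hy : ∀ t : ℝ, HasDerivAt y (-(y t) - (y t) ^ 3) t) :
    Tendsto y atTop (nhds 0) ∧
    ∀ t : ℝ, 0 ≤ t → (y t) ^ 2 ≤ (y 0) ^ 2 * Real.exp (-2 * t) := by
  have hdiss : ∀ t, y t * (-(y t) - y t ^ 3) ≤ -1 * y t ^ 2 := fun t => by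
    nlinarith [pow_two_nonneg (y t ^ 2)]
  have hbound : ∀ t : ℝ, 0 ≤ t → y t ^ 2 ≤ y 0 ^ 2 * exp (-2 * t) := fun t ht => by
    simpa using sq_le_sq_mul_exp_of_mul_deriv_le hy hdiss ht
  refine ⟨Tendsto.of_sq_tendsto_zero ?_, hbound⟩
  refine squeeze_zero' (Eventually.of_forall fun t => sq_nonneg (y t)) ?_
    (tendsto_mul_exp_neg_mul_atTop_nhds_zero (y 0 ^ 2) two_pos)
  filter_upwards [eventually_ge_atTop 0] with t ht
  simpa using hbound t ht
end
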